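/- arXiv:0711.4325 — 3 statements merged into one kernel-verified Lean document; each statement's English description precedes it below -/
import Mathlib

section
/- Every non-empty class of permutations (determined by the positions and values of left-to-right minima and right-to-left maxima) contains exactly one 1234-avoiding permutation, namely the one in which the entries that are neither left-to-right minima nor right-to-left maxima form a decreasing subsequence. -/
/-- `p i` is a left-to-right minimum: it is smaller than every entry to its left. -/
def LRMin {n : ℕ} (p : Equiv.Perm (Fin n)) (i : Fin n) : Prop :=
  ∀ j : Fin n, j < i → p i < p j

/-- `p i` is a right-to-left maximum: it is larger than every entry to its right. -/
def RLMax {n : ℕ} (p : Equiv.Perm (Fin n)) (i : Fin n) : Prop :=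
  ∀ j : Fin n, i < j → p j < p i

/-- Two permutations are in the same class when they have the same left-to-right
minima in the same positions and the same right-to-left maxima in the same positions. -/
def SameClass {n : ℕ} (p r : Equiv.Perm (Fin n)) : Prop :=
  (∀ i, LRMin p i ↔ LRMin r i) ∧ (∀ i, RLMax p i ↔ RLMax r i) ∧
  (∀ i, LRMin p i → p i = r i) ∧ (∀ i, RLMax p i → p i = r i)

/-- `p` avoids 1234, i.e. has no increasing subsequence of length four. -/
def Avoids1234 {n : ℕ} (p : Equiv.Perm (Fin n)) : Prop :=
  ¬ ∃ f : Fin 4 ↪o Fin n, StrictMono (⇑p ∘ ⇑f)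

namespace Avoider

variable {n : ℕ} (p : Equiv.Perm (Fin n))

/-- prefix minimum: there is an LR-min position before `i` whose value is ≤ `p j`. -/
lemma exists_lrmin_le {i j : Fin n} (hj : j < i) :
    ∃ m, m < i ∧ LRMin p m ∧ p m ≤ p j := by
  obtain ⟨m, hm, hmin⟩ := Finset.exists_min_image (Finset.Iio i) p ⟨j, Finset.mem_Iio.2 hj⟩
  rw [Finset.mem_Iio] at hm
  refine ⟨m, hm, ?_, hmin j (Finset.mem_Iio.2 hj)⟩
  intro j' hj'
  have h1 := hmin j' (Finset.mem_Iio.2 (hj'.trans hm))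
  exact lt_of_le_of_ne h1 (fun h => (ne_of_lt hj') (p.injective h).symm)

lemma exists_rlmax_ge {i j : Fin n} (hj : i < j) :
    ∃ m, i < m ∧ RLMax p m ∧ p j ≤ p m := by
  obtain ⟨m, hm, hmax⟩ := Finset.exists_max_image (Finset.Ioi i) p ⟨j, Finset.mem_Ioi.2 hj⟩
  rw [Finset.mem_Ioi] at hm
  refine ⟨m, hm, ?_, hmax j (Finset.mem_Ioi.2 hj)⟩
  intro j' hj'
  have h1 := hmax j' (Finset.mem_Ioi.2 (hm.trans hj'))
  exact lt_of_le_of_ne h1 (fun h => (ne_of_lt hj') ((p.injective h).symm))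

lemma not_lrmin_elim {i : Fin n} (h : ¬ LRMin p i) :
    ∃ m, m < i ∧ LRMin p m ∧ p m < p i := by
  unfold LRMin at h
  push_neg at h
  obtain ⟨j, hj, hji⟩ := h
  have hji' : p j < p i :=
    lt_of_le_of_ne hji (fun h => (ne_of_lt hj) (p.injective h))
  obtain ⟨m, hm1, hm2, hm3⟩ := exists_lrmin_le p hj
  exact ⟨m, hm1, hm2, lt_of_le_of_lt hm3 hji'⟩

lemma not_rlmax_elim {i : Fin n} (h : ¬ RLMax p i) :
    ∃ m, i < m ∧ RLMax p m ∧ p i < p m := by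
  unfold RLMax at h
  push_neg at h
  obtain ⟨j, hj, hji⟩ := h
  have hji' : p i < p j :=
    lt_of_le_of_ne hji (fun h => (ne_of_lt hj) (p.injective h))
  obtain ⟨m, hm1, hm2, hm3⟩ := exists_rlmax_ge p hj
  exact ⟨m, hm1, hm2, lt_of_lt_of_le hji' hm3⟩


open Classical in
/-- the set of non-special positions -/
noncomputable def Pset : Finset (Fin n) :=
  Finset.univ.filter (fun i => ¬ LRMin p i ∧ ¬ RLMax p i)

lemma mem_Pset {i : Fin n} : i ∈ Pset p ↔ ¬ LRMin p i ∧ ¬ RLMax p i := by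
  simp [Pset]

/-- the set of non-special values -/
noncomputable def Wset : Finset (Fin n) := (Pset p).image p

lemma card_Wset : (Wset p).card = (Pset p).card :=
  Finset.card_image_of_injective _ p.injective

lemma mem_Wset {v : Fin n} : v ∈ Wset p ↔ p.symm v ∈ Pset p := by
  constructor
  · intro hv
    obtain ⟨j, hj, rfl⟩ := Finset.mem_image.1 hv
    simpa using hj
  · intro h
    exact Finset.mem_image.2 ⟨p.symm v, h, p.apply_symm_apply v⟩

lemma p_mem_Wset {i : Fin n} : p i ∈ Wset p ↔ i ∈ Pset p := by
  rw [mem_Wset]; simp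

noncomputable def eP : Fin (Pset p).card ≃o {x // x ∈ Pset p} :=
  (Pset p).orderIsoOfFin rfl

noncomputable def eW : Fin (Pset p).card ≃o {x // x ∈ Wset p} :=
  (Wset p).orderIsoOfFin (card_Wset p)

noncomputable def rfun : Fin n → Fin n := fun i =>
  if h : i ∈ Pset p then (eW p ((eP p).symm ⟨i, h⟩).rev : Fin n) else p i

lemma rfun_of_not_mem {i : Fin n} (h : i ∉ Pset p) : rfun p i = p i := dif_neg h

lemma rfun_eq_of_mem {i : Fin n} (h : i ∈ Pset p) :
    rfun p i = (eW p ((eP p).symm ⟨i, h⟩).rev : Fin n) := dif_pos h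

lemma rfun_mem {i : Fin n} (h : i ∈ Pset p) : rfun p i ∈ Wset p := by
  rw [rfun_eq_of_mem p h]; exact (eW p _).2

lemma rfun_not_mem {i : Fin n} (h : i ∉ Pset p) : rfun p i ∉ Wset p := by
  rw [rfun_of_not_mem p h, p_mem_Wset]; exact h

lemma rfun_anti {i j : Fin n} (hi : i ∈ Pset p) (hj : j ∈ Pset p) (hij : i < j) :
    rfun p j < rfun p i := by
  rw [rfun_eq_of_mem p hi, rfun_eq_of_mem p hj]
  have h1 : ((eP p).symm ⟨i, hi⟩) < ((eP p).symm ⟨j, hj⟩) := by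
    rw [OrderIso.lt_iff_lt]; exact Subtype.mk_lt_mk.2 hij
  have h2 : ((eP p).symm ⟨j, hj⟩).rev < ((eP p).symm ⟨i, hi⟩).rev :=
    Fin.rev_lt_rev.2 h1
  exact Subtype.coe_lt_coe.2 ((eW p).lt_iff_lt.2 h2)

lemma rfun_inj : Function.Injective (rfun p) := by
  intro i j hij
  by_cases hi : i ∈ Pset p <;> by_cases hj : j ∈ Pset p
  · rw [rfun_eq_of_mem p hi, rfun_eq_of_mem p hj] at hij
    have h1 := (eP p).symm.injective (Fin.rev_injective ((eW p).injective
      (Subtype.coe_injective hij)))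
    exact Subtype.mk_eq_mk.1 h1
  · exact absurd (hij ▸ rfun_mem p hi) (rfun_not_mem p hj)
  · exact absurd (hij.symm ▸ rfun_mem p hj) (rfun_not_mem p hi)
  · rw [rfun_of_not_mem p hi, rfun_of_not_mem p hj] at hij
    exact p.injective hij

noncomputable def rperm : Equiv.Perm (Fin n) :=
  Equiv.ofBijective _ (Finite.injective_iff_bijective.1 (rfun_inj p))

lemma rperm_apply (i : Fin n) : rperm p i = rfun p i := rfl


lemma card_filter_le (s : Finset (Fin n)) {k : ℕ} (hs : s.card = k) (t : Fin k) :
    (s.filter (fun x => x ≤ (s.orderIsoOfFin hs t : Fin n))).card = t + 1 := by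
  have himg : s.filter (fun x => x ≤ (s.orderIsoOfFin hs t : Fin n)) =
      (Finset.Iic t).image (fun u => (s.orderIsoOfFin hs u : Fin n)) := by
    ext x
    simp only [Finset.mem_filter, Finset.mem_image, Finset.mem_Iic]
    constructor
    · rintro ⟨hx, hxle⟩
      refine ⟨(s.orderIsoOfFin hs).symm ⟨x, hx⟩, ?_, ?_⟩
      · rw [OrderIso.symm_apply_le]
        exact Subtype.mk_le_mk.2 hxle
      · rw [OrderIso.apply_symm_apply]
    · rintro ⟨u, hu, rfl⟩
      exact ⟨(s.orderIsoOfFin hs u).2,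
        Subtype.coe_le_coe.2 ((s.orderIsoOfFin hs).le_iff_le.2 hu)⟩
  rw [himg, Finset.card_image_of_injective _
    (fun a b hab => (s.orderIsoOfFin hs).injective (Subtype.coe_injective hab)),
    Fin.card_Iic]

lemma card_filter_ge (s : Finset (Fin n)) {k : ℕ} (hs : s.card = k) (t : Fin k) :
    (s.filter (fun x => (s.orderIsoOfFin hs t : Fin n) ≤ x)).card = k - t := by
  have himg : s.filter (fun x => (s.orderIsoOfFin hs t : Fin n) ≤ x) =
      (Finset.Ici t).image (fun u => (s.orderIsoOfFin hs u : Fin n)) := by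
    ext x
    simp only [Finset.mem_filter, Finset.mem_image, Finset.mem_Ici]
    constructor
    · rintro ⟨hx, hxle⟩
      refine ⟨(s.orderIsoOfFin hs).symm ⟨x, hx⟩, ?_, ?_⟩
      · rw [OrderIso.le_symm_apply]
        exact Subtype.mk_le_mk.2 hxle
      · rw [OrderIso.apply_symm_apply]
    · rintro ⟨u, hu, rfl⟩
      exact ⟨(s.orderIsoOfFin hs u).2,
        Subtype.coe_le_coe.2 ((s.orderIsoOfFin hs).le_iff_le.2 hu)⟩
  rw [himg, Finset.card_image_of_injective _
    (fun a b hab => (s.orderIsoOfFin hs).injective (Subtype.coe_injective hab)),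
    Fin.card_Ici]


lemma claimB {i : Fin n} (hi : i ∈ Pset p) :
    ∃ m, i < m ∧ RLMax p m ∧ rfun p i < p m := by
  by_contra hcon
  push_neg at hcon
  set t := (eP p).symm ⟨i, hi⟩ with ht
  set w := (eW p t.rev : Fin n) with hw
  have hri : rfun p i = w := rfun_eq_of_mem p hi
  rw [hri] at hcon
  have step1 : ∀ v ∈ Wset p, w ≤ v → p.symm v ≤ i := by
    intro v hv hwv
    by_contra hlt
    rw [not_le] at hlt
    have hvP : p.symm v ∈ Pset p := (mem_Wset p).1 hv
    obtain ⟨m, hm1, hm2, hm3⟩ := not_rlmax_elim p ((mem_Pset p).1 hvP).2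
    rw [p.apply_symm_apply] at hm3
    have hmw := hcon m (hlt.trans hm1) hm2
    exact absurd ((hwv.trans_lt hm3).trans_le hmw) (lt_irrefl w)
  have hsub : ((Wset p).filter (fun v => w ≤ v)).image p.symm ⊆
      (Pset p).filter (fun x => x ≤ i) := by
    intro x hx
    obtain ⟨v, hv, rfl⟩ := Finset.mem_image.1 hx
    rw [Finset.mem_filter] at hv
    exact Finset.mem_filter.2 ⟨(mem_Wset p).1 hv.1, step1 v hv.1 hv.2⟩
  have cardA : ((Wset p).filter (fun v => w ≤ v)).card = (t : ℕ) + 1 := by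
    have h1 : ((Wset p).filter (fun v => w ≤ v)).card = (Pset p).card - (t.rev : ℕ) :=
      card_filter_ge (Wset p) (card_Wset p) t.rev
    rw [h1, Fin.val_rev]
    have := t.isLt
    omega
  have cardB : ((Pset p).filter (fun x => x ≤ i)).card = (t : ℕ) + 1 := by
    have hco : ((Pset p).orderIsoOfFin rfl t : Fin n) = i :=
      congrArg Subtype.val ((eP p).apply_symm_apply ⟨i, hi⟩)
    have h1 := card_filter_le (Pset p) rfl t
    rw [hco] at h1
    exact h1
  have himg : ((Wset p).filter (fun v => w ≤ v)).image p.symm =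
      (Pset p).filter (fun x => x ≤ i) := by
    apply Finset.eq_of_subset_of_card_le hsub
    rw [Finset.card_image_of_injective _ p.symm.injective, cardA, cardB]
  have hiB : i ∈ ((Wset p).filter (fun v => w ≤ v)).image p.symm := by
    rw [himg]; exact Finset.mem_filter.2 ⟨hi, le_refl i⟩
  obtain ⟨v, hv, hvi⟩ := Finset.mem_image.1 hiB
  rw [Finset.mem_filter] at hv
  have hpi : w ≤ p i := by
    have hv2 : v = p i := (Equiv.symm_apply_eq p).1 hvi
    exact hv2 ▸ hv.2
  obtain ⟨m, hm1, hm2, hm3⟩ := not_rlmax_elim p ((mem_Pset p).1 hi).2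
  exact absurd ((hpi.trans_lt hm3).trans_le (hcon m hm1 hm2)) (lt_irrefl w)

lemma claimA {i : Fin n} (hi : i ∈ Pset p) :
    ∃ m, m < i ∧ LRMin p m ∧ p m < rfun p i := by
  by_contra hcon
  push_neg at hcon
  set t := (eP p).symm ⟨i, hi⟩ with ht
  set w := (eW p t.rev : Fin n) with hw
  have hri : rfun p i = w := rfun_eq_of_mem p hi
  rw [hri] at hcon
  have step1 : ∀ v ∈ Wset p, v ≤ w → i ≤ p.symm v := by
    intro v hv hwv
    by_contra hlt
    rw [not_le] at hlt
    have hvP : p.symm v ∈ Pset p := (mem_Wset p).1 hv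
    obtain ⟨m, hm1, hm2, hm3⟩ := not_lrmin_elim p ((mem_Pset p).1 hvP).1
    rw [p.apply_symm_apply] at hm3
    have hmw := hcon m (hm1.trans hlt) hm2
    exact absurd ((hmw.trans_lt hm3).trans_le hwv) (lt_irrefl w)
  have hsub : ((Wset p).filter (fun v => v ≤ w)).image p.symm ⊆
      (Pset p).filter (fun x => i ≤ x) := by
    intro x hx
    obtain ⟨v, hv, rfl⟩ := Finset.mem_image.1 hx
    rw [Finset.mem_filter] at hv
    exact Finset.mem_filter.2 ⟨(mem_Wset p).1 hv.1, step1 v hv.1 hv.2⟩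
  have cardA : ((Wset p).filter (fun v => v ≤ w)).card = (Pset p).card - (t : ℕ) := by
    have h1 : ((Wset p).filter (fun v => v ≤ w)).card = (t.rev : ℕ) + 1 :=
      card_filter_le (Wset p) (card_Wset p) t.rev
    rw [h1, Fin.val_rev]
    have := t.isLt
    omega
  have cardB : ((Pset p).filter (fun x => i ≤ x)).card = (Pset p).card - (t : ℕ) := by
    have hco : ((Pset p).orderIsoOfFin rfl t : Fin n) = i :=
      congrArg Subtype.val ((eP p).apply_symm_apply ⟨i, hi⟩)
    have h1 := card_filter_ge (Pset p) rfl t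
    rw [hco] at h1
    exact h1
  have himg : ((Wset p).filter (fun v => v ≤ w)).image p.symm =
      (Pset p).filter (fun x => i ≤ x) := by
    apply Finset.eq_of_subset_of_card_le hsub
    rw [Finset.card_image_of_injective _ p.symm.injective, cardA, cardB]
  have hiB : i ∈ ((Wset p).filter (fun v => v ≤ w)).image p.symm := by
    rw [himg]; exact Finset.mem_filter.2 ⟨hi, le_refl i⟩
  obtain ⟨v, hv, hvi⟩ := Finset.mem_image.1 hiB
  rw [Finset.mem_filter] at hv
  have hpi : p i ≤ w := by
    have hv2 : v = p i := (Equiv.symm_apply_eq p).1 hvi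
    exact hv2 ▸ hv.2
  obtain ⟨m, hm1, hm2, hm3⟩ := not_lrmin_elim p ((mem_Pset p).1 hi).1
  exact absurd (((hcon m hm1 hm2).trans_lt hm3).trans_le hpi) (lt_irrefl w)


lemma lrmin_rperm_iff (i : Fin n) : LRMin p i ↔ LRMin (rperm p) i := by
  constructor
  · intro h
    have hiP : i ∉ Pset p := fun hP => ((mem_Pset p).1 hP).1 h
    intro j hj
    rw [rperm_apply, rperm_apply, rfun_of_not_mem p hiP]
    by_cases hjP : j ∈ Pset p
    · obtain ⟨m, hm1, hm2, hm3⟩ := claimA p hjP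
      exact lt_trans (h m (hm1.trans hj)) hm3
    · rw [rfun_of_not_mem p hjP]; exact h j hj
  · intro h
    by_contra hL
    by_cases hiP : i ∈ Pset p
    · obtain ⟨m, hm1, hm2, hm3⟩ := claimA p hiP
      have hmP : m ∉ Pset p := fun hP => ((mem_Pset p).1 hP).1 hm2
      have h2 := h m hm1
      rw [rperm_apply, rperm_apply, rfun_of_not_mem p hmP] at h2
      exact absurd (h2.trans hm3) (lt_irrefl _)
    · obtain ⟨m, hm1, hm2, hm3⟩ := not_lrmin_elim p hL
      have hmP : m ∉ Pset p := fun hP => ((mem_Pset p).1 hP).1 hm2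
      have h2 := h m hm1
      rw [rperm_apply, rperm_apply, rfun_of_not_mem p hmP, rfun_of_not_mem p hiP] at h2
      exact absurd (h2.trans hm3) (lt_irrefl _)

lemma rlmax_rperm_iff (i : Fin n) : RLMax p i ↔ RLMax (rperm p) i := by
  constructor
  · intro h
    have hiP : i ∉ Pset p := fun hP => ((mem_Pset p).1 hP).2 h
    intro j hj
    rw [rperm_apply, rperm_apply, rfun_of_not_mem p hiP]
    by_cases hjP : j ∈ Pset p
    · obtain ⟨m, hm1, hm2, hm3⟩ := claimB p hjP
      exact lt_trans hm3 (h m (hj.trans hm1))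
    · rw [rfun_of_not_mem p hjP]; exact h j hj
  · intro h
    by_contra hL
    by_cases hiP : i ∈ Pset p
    · obtain ⟨m, hm1, hm2, hm3⟩ := claimB p hiP
      have hmP : m ∉ Pset p := fun hP => ((mem_Pset p).1 hP).2 hm2
      have h2 := h m hm1
      rw [rperm_apply, rperm_apply, rfun_of_not_mem p hmP] at h2
      exact absurd (hm3.trans h2) (lt_irrefl _)
    · obtain ⟨m, hm1, hm2, hm3⟩ := not_rlmax_elim p hL
      have hmP : m ∉ Pset p := fun hP => ((mem_Pset p).1 hP).2 hm2
      have h2 := h m hm1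
      rw [rperm_apply, rperm_apply, rfun_of_not_mem p hmP, rfun_of_not_mem p hiP] at h2
      exact absurd (hm3.trans h2) (lt_irrefl _)

lemma strictMono4 {a b c d : Fin n} (hab : a < b) (hbc : b < c) (hcd : c < d) :
    StrictMono ![a, b, c, d] := by
  rw [Fin.strictMono_iff_lt_succ]
  intro i
  fin_cases i <;> simp <;> assumption

lemma avoids_of_nonspecial_decreasing (q : Equiv.Perm (Fin n))
    (hdec : ∀ i j, i < j → ¬ LRMin q i → ¬ RLMax q i → ¬ LRMin q j → ¬ RLMax q j →
      q j < q i) :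
    Avoids1234 q := by
  rintro ⟨f, hf⟩
  have h12 : f 1 < f 2 := f.strictMono (by decide : (1:Fin 4) < 2)
  have v01 : q (f 0) < q (f 1) := hf (by decide : (0:Fin 4) < 1)
  have v12 : q (f 1) < q (f 2) := hf (by decide : (1:Fin 4) < 2)
  have v23 : q (f 2) < q (f 3) := hf (by decide : (2:Fin 4) < 3)
  have h01 : f 0 < f 1 := f.strictMono (by decide : (0:Fin 4) < 1)
  have h23 : f 2 < f 3 := f.strictMono (by decide : (2:Fin 4) < 3)
  have h1L : ¬ LRMin q (f 1) := fun h => absurd (h (f 0) h01) (not_lt.2 v01.le)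
  have h1R : ¬ RLMax q (f 1) := fun h => absurd (h (f 2) h12) (not_lt.2 v12.le)
  have h2L : ¬ LRMin q (f 2) := fun h => absurd (h (f 1) h12) (not_lt.2 v12.le)
  have h2R : ¬ RLMax q (f 2) := fun h => absurd (h (f 3) h23) (not_lt.2 v23.le)
  exact absurd v12 (not_lt.2 (hdec _ _ h12 h1L h1R h2L h2R).le)

lemma dec_of_avoids (q : Equiv.Perm (Fin n)) (hcls : SameClass p q) (hav : Avoids1234 q)
    {i j : Fin n} (hi : i ∈ Pset p) (hj : j ∈ Pset p) (hij : i < j) : q j < q i := by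
  have hiL : ¬ LRMin q i := fun h => ((mem_Pset p).1 hi).1 ((hcls.1 i).2 h)
  have hjR : ¬ RLMax q j := fun h => ((mem_Pset p).1 hj).2 ((hcls.2.1 j).2 h)
  obtain ⟨a, ha, haq⟩ : ∃ a, a < i ∧ q a < q i := by
    unfold LRMin at hiL; push_neg at hiL
    obtain ⟨a, ha, h2⟩ := hiL
    exact ⟨a, ha, lt_of_le_of_ne h2 (fun h => (ne_of_lt ha) (q.injective h))⟩
  obtain ⟨d, hd, hdq⟩ : ∃ d, j < d ∧ q j < q d := by
    unfold RLMax at hjR; push_neg at hjR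
    obtain ⟨d, hd, h2⟩ := hjR
    exact ⟨d, hd, lt_of_le_of_ne h2 (fun h => (ne_of_lt hd) (q.injective h))⟩
  by_contra hcon
  rw [not_lt] at hcon
  have hqij : q i < q j := lt_of_le_of_ne hcon (fun h => (ne_of_lt hij) (q.injective h))
  apply hav
  refine ⟨OrderEmbedding.ofStrictMono ![a, i, j, d] (strictMono4 ha hij hd), ?_⟩
  rw [OrderEmbedding.coe_ofStrictMono]
  have hcomp : ⇑q ∘ ![a, i, j, d] = ![q a, q i, q j, q d] := by
    funext x; fin_cases x <;> rfl
  rw [hcomp]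
  exact strictMono4 haq hqij hdq

lemma class_eq_on_special (q : Equiv.Perm (Fin n)) (hcls : SameClass p q) {i : Fin n}
    (hi : i ∉ Pset p) : q i = p i := by
  rw [mem_Pset, not_and_or, not_not, not_not] at hi
  rcases hi with h | h
  · exact (hcls.2.2.1 i h).symm
  · exact (hcls.2.2.2 i h).symm

lemma class_maps_Pset (q : Equiv.Perm (Fin n)) (hcls : SameClass p q) {i : Fin n}
    (hi : i ∈ Pset p) : q i ∈ Wset p := by
  classical
  have hsub : (Pset p)ᶜ.image q ⊆ (Wset p)ᶜ := by
    intro x hx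
    obtain ⟨j, hj, rfl⟩ := Finset.mem_image.1 hx
    rw [Finset.mem_compl] at hj ⊢
    rw [class_eq_on_special p q hcls hj, p_mem_Wset]
    exact hj
  have hcards : ((Wset p)ᶜ).card ≤ ((Pset p)ᶜ.image q).card := by
    rw [Finset.card_image_of_injective _ q.injective, Finset.card_compl, Finset.card_compl,
      card_Wset]
  have heq := Finset.eq_of_subset_of_card_le hsub hcards
  by_contra hqW
  have hmem : q i ∈ (Wset p)ᶜ := Finset.mem_compl.2 hqW
  rw [← heq] at hmem
  obtain ⟨j, hj, hji⟩ := Finset.mem_image.1 hmem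
  have hje : j = i := q.injective hji
  exact (Finset.mem_compl.1 (hje ▸ hj)) hi

lemma class_avoids_eq (q : Equiv.Perm (Fin n)) (hcls : SameClass p q) (hav : Avoids1234 q) :
    q = rperm p := by
  ext i
  by_cases hi : i ∈ Pset p
  · set t := (eP p).symm ⟨i, hi⟩ with htdef
    have hit : ((eP p t : {x // x ∈ Pset p}) : Fin n) = i :=
      congrArg Subtype.val ((eP p).apply_symm_apply ⟨i, hi⟩)
    have hF : (fun u : Fin (Pset p).card => q ((eP p u.rev : Fin n))) =
        ⇑((Wset p).orderEmbOfFin (card_Wset p)) := by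
      apply Finset.orderEmbOfFin_unique
      · intro u; exact class_maps_Pset p q hcls (eP p u.rev).2
      · intro u v huv
        have h1 : v.rev < u.rev := Fin.rev_lt_rev.2 huv
        have h2 : ((eP p v.rev : Fin n)) < ((eP p u.rev : Fin n)) :=
          Subtype.coe_lt_coe.2 ((eP p).lt_iff_lt.2 h1)
        exact dec_of_avoids p q hcls hav (eP p v.rev).2 (eP p u.rev).2 h2
    have hG : ∀ u : Fin (Pset p).card, rfun p ((eP p u.rev : Fin n)) =
        ((Wset p).orderEmbOfFin (card_Wset p)) u := by
      intro u
      have hm := (eP p u.rev).2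
      rw [rfun_eq_of_mem p hm]
      have hsub : (⟨((eP p u.rev : Fin n)), hm⟩ : {x // x ∈ Pset p}) = eP p u.rev := rfl
      rw [hsub, (eP p).symm_apply_apply, Fin.rev_rev]
      rfl
    have hFt := congrFun hF t.rev
    simp only [Fin.rev_rev] at hFt
    rw [hit] at hFt
    have hGt := hG t.rev
    rw [Fin.rev_rev, hit] at hGt
    rw [rperm_apply, hGt, hFt]
  · rw [rperm_apply, rfun_of_not_mem p hi, class_eq_on_special p q hcls hi]

end Avoider

/-- Every class contains exactly one 1234-avoiding permutation, namely the one in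
which the entries that are neither left-to-right minima nor right-to-left maxima
form a decreasing subsequence. -/
theorem unique_1234_avoider_in_class (n : ℕ) (p : Equiv.Perm (Fin n)) :
    ∃ r : Equiv.Perm (Fin n),
      (SameClass p r ∧ Avoids1234 r ∧
        (∀ i j : Fin n, i < j → ¬ LRMin r i → ¬ RLMax r i → ¬ LRMin r j →
          ¬ RLMax r j → r j < r i)) ∧
      (∀ r' : Equiv.Perm (Fin n), SameClass p r' → Avoids1234 r' → r' = r) := by
  refine ⟨Avoider.rperm p, ⟨⟨fun i => Avoider.lrmin_rperm_iff p i,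
    fun i => Avoider.rlmax_rperm_iff p i, ?_, ?_⟩, ?_, ?_⟩,
    fun r' h1 h2 => Avoider.class_avoids_eq p r' h1 h2⟩
  · intro i h
    have hiP : i ∉ Avoider.Pset p := fun hP => ((Avoider.mem_Pset p).1 hP).1 h
    exact (Avoider.rfun_of_not_mem p hiP).symm
  · intro i h
    have hiP : i ∉ Avoider.Pset p := fun hP => ((Avoider.mem_Pset p).1 hP).2 h
    exact (Avoider.rfun_of_not_mem p hiP).symm
  · apply Avoider.avoids_of_nonspecial_decreasing
    intro i j hij hLi hRi hLj hRj
    have hiP : i ∈ Avoider.Pset p := (Avoider.mem_Pset p).2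
      ⟨fun h => hLi ((Avoider.lrmin_rperm_iff p i).1 h),
       fun h => hRi ((Avoider.rlmax_rperm_iff p i).1 h)⟩
    have hjP : j ∈ Avoider.Pset p := (Avoider.mem_Pset p).2
      ⟨fun h => hLj ((Avoider.lrmin_rperm_iff p j).1 h),
       fun h => hRj ((Avoider.rlmax_rperm_iff p j).1 h)⟩
    exact Avoider.rfun_anti p hiP hjP hij
  · intro i j hij hLi hRi hLj hRj
    have hiP : i ∈ Avoider.Pset p := (Avoider.mem_Pset p).2
      ⟨fun h => hLi ((Avoider.lrmin_rperm_iff p i).1 h),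
       fun h => hRi ((Avoider.rlmax_rperm_iff p i).1 h)⟩
    have hjP : j ∈ Avoider.Pset p := (Avoider.mem_Pset p).2
      ⟨fun h => hLj ((Avoider.lrmin_rperm_iff p j).1 h),
       fun h => hRj ((Avoider.rlmax_rperm_iff p j).1 h)⟩
    exact Avoider.rfun_anti p hiP hjP hij
end

section
/- If a permutation contains a 1324-pattern, then it contains a 1324-pattern whose first element is a left-to-right minimum and whose last element is a right-to-left maximum. -/
/-- If `p` contains a 1324-pattern, it contains one whose first element is a
left-to-right minimum and whose last element is a right-to-left maximum. -/
theorem contains_1324_with_extremes (n : ℕ) (p : Equiv.Perm (Fin n))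
    (h : ∃ i j k l : Fin n, i < j ∧ j < k ∧ k < l ∧
      p i < p k ∧ p k < p j ∧ p j < p l) :
    ∃ i j k l : Fin n, i < j ∧ j < k ∧ k < l ∧
      p i < p k ∧ p k < p j ∧ p j < p l ∧ LRMin p i ∧ RLMax p l := by
  obtain ⟨i, j, k, l, hij, hjk, hkl, h1, h2, h3⟩ := h
  obtain ⟨i', hi'mem, hi'min⟩ :=
    Finset.exists_min_image (Finset.Iic i) p ⟨i, Finset.mem_Iic.mpr le_rfl⟩
  obtain ⟨l', hl'mem, hl'max⟩ :=
    Finset.exists_max_image (Finset.Ici l) p ⟨l, Finset.mem_Ici.mpr le_rfl⟩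
  have hi'le : i' ≤ i := Finset.mem_Iic.mp hi'mem
  have hl'ge : l ≤ l' := Finset.mem_Ici.mp hl'mem
  refine ⟨i', j, k, l', lt_of_le_of_lt hi'le hij, hjk, lt_of_lt_of_le hkl hl'ge,
    lt_of_le_of_lt (hi'min i (Finset.mem_Iic.mpr le_rfl)) h1,
    h2,
    lt_of_lt_of_le h3 (hl'max l (Finset.mem_Ici.mpr le_rfl)),
    ?_, ?_⟩
  · intro j0 hj0
    have hle : p i' ≤ p j0 :=
      hi'min j0 (Finset.mem_Iic.mpr (le_of_lt (lt_of_lt_of_le hj0 hi'le)))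
    exact hle.lt_of_ne fun e => (ne_of_gt hj0) (p.injective e)
  · intro j0 hj0
    have hle : p j0 ≤ p l' :=
      hl'max j0 (Finset.mem_Ici.mpr (le_of_lt (lt_of_le_of_lt hl'ge hj0)))
    exact hle.lt_of_ne fun e => (ne_of_gt hj0) (p.injective e)
end

section
/- Fix k ≥ 2 and let Y_n count tight (consecutive-position) occurrences of the increasing pattern 12...k in a uniformly random permutation of length n. Then E(Y_n) = (n-k+1)/k!, and there is a positive constant c with Var(Y_n) ≥ c·n for all sufficiently large n; indeed Var(Y_n) ≥ (1/k! + 2/(k+1)! − (2k−1)/k!²)·n + d_k for a constant d_k depending only on k. -/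
open Equiv Finset

/-- The window of `k` consecutive positions of `p` starting at position `i`
(zero-indexed) is increasing. -/
def TightInc {n : ℕ} (k : ℕ) (p : Equiv.Perm (Fin n)) (i : ℕ) : Prop :=
  ∀ j1 j2 : Fin n, i ≤ (j1 : ℕ) → (j1 : ℕ) < (j2 : ℕ) → (j2 : ℕ) < i + k →
    p j1 < p j2

namespace TC

variable {n a L : ℕ}

def winEquiv (hL : a + L ≤ n) :
    Fin L ≃ {x : Fin n // a ≤ (x : ℕ) ∧ (x : ℕ) < a + L} where
  toFun j := ⟨⟨a + j, by omega⟩, by simp⟩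
  invFun x := ⟨x.1.1 - a, by have := x.2; omega⟩
  left_inv j := by ext; simp
  right_inv x := by ext; have := x.2; simp; omega

/-- embed a permutation of the window `[a, a+L)` into `Perm (Fin n)`. -/
def emb (hL : a + L ≤ n) (σ : Perm (Fin L)) : Perm (Fin n) :=
  σ.extendDomain (winEquiv hL)

lemma emb_apply_in (hL : a + L ≤ n) (σ : Perm (Fin L)) (j : Fin L) :
    emb hL σ ⟨a + j, by omega⟩ = ⟨a + σ j, by omega⟩ := by
  have := Equiv.Perm.extendDomain_apply_image σ (winEquiv hL) j
  simpa [winEquiv, emb] using this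

lemma emb_apply_out (hL : a + L ≤ n) (σ : Perm (Fin L)) (x : Fin n)
    (hx : ¬ (a ≤ (x : ℕ) ∧ (x : ℕ) < a + L)) : emb hL σ x = x :=
  Equiv.Perm.extendDomain_apply_not_subtype σ (winEquiv hL) hx

lemma emb_mul (hL : a + L ≤ n) (σ τ : Perm (Fin L)) :
    emb hL (σ * τ) = emb hL σ * emb hL τ := by
  unfold emb
  exact (Equiv.Perm.extendDomain_mul _ σ τ).symm

lemma emb_inv (hL : a + L ≤ n) (σ : Perm (Fin L)) :
    emb hL σ⁻¹ = (emb hL σ)⁻¹ := by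
  unfold emb
  exact (Equiv.Perm.extendDomain_inv _ _).symm

lemma tightInc_iff (hL : a + L ≤ n) (p : Perm (Fin n)) :
    TightInc L p a ↔ StrictMono (fun j : Fin L => p ⟨a + j, by omega⟩) := by
  constructor
  · intro h j1 j2 hj
    exact h _ _ (by simp) (by simpa using hj) (by simp)
  · intro h j1 j2 h1 h2 h3
    have e1 : p j1 = p ⟨a + ((j1:ℕ) - a), by omega⟩ := by congr 1; ext; simp; omega
    have e2 : p j2 = p ⟨a + ((j2:ℕ) - a), by omega⟩ := by congr 1; ext; simp; omega
    rw [e1, e2]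
    exact h (a := ⟨(j1:ℕ) - a, by omega⟩) (b := ⟨(j2:ℕ) - a, by omega⟩) (by simp; omega)

lemma window_inj (p : Perm (Fin n)) (hL : a + L ≤ n) :
    Function.Injective (fun j : Fin L => p ⟨a + j, by omega⟩) := by
  intro x y hxy
  have := congrArg Fin.val (p.injective hxy)
  simp only at this
  ext; omega

lemma perm_strictMono_eq_one {L : ℕ} (τ : Perm (Fin L)) (h : StrictMono τ) : τ = 1 := by
  have h2 : (StrictMono.orderIsoOfSurjective τ h τ.surjective) = OrderIso.refl (Fin L) :=
    Subsingleton.elim _ _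
  ext x
  have h3 := congrArg (fun f : Fin L ≃o Fin L => f x) h2
  exact congrArg Fin.val (by simpa using h3)

lemma key_bij (hL : a + L ≤ n) (S : Perm (Fin n) → Prop)
    (hS : ∀ p σ, S p → S (p * emb hL σ)) :
    Function.Bijective (fun x : {p : Perm (Fin n) // S p ∧ TightInc L p a} × Perm (Fin L) =>
      (⟨x.1.1 * emb hL x.2, hS _ _ x.1.2.1⟩ : {p : Perm (Fin n) // S p})) := by
  constructor
  · rintro ⟨⟨q1, hq1, hq1i⟩, σ1⟩ ⟨⟨q2, hq2, hq2i⟩, σ2⟩ heq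
    have heq : q1 * emb hL σ1 = q2 * emb hL σ2 := congrArg Subtype.val heq
    set τ : Perm (Fin L) := σ1 * σ2⁻¹ with hτ
    have hq2e : q2 = q1 * emb hL τ := by
      rw [hτ, emb_mul, emb_inv, ← mul_assoc, heq, mul_inv_cancel_right]
    have hg1 : StrictMono (fun j : Fin L => q1 ⟨a + j, by omega⟩) := (tightInc_iff hL q1).1 hq1i
    have hg2 : StrictMono (fun j : Fin L => q2 ⟨a + j, by omega⟩) := (tightInc_iff hL q2).1 hq2i
    have hcomp : ∀ j : Fin L, q2 ⟨a + j, by omega⟩ = q1 ⟨a + τ j, by omega⟩ := by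
      intro j
      rw [hq2e]
      show q1 (emb hL τ ⟨a + j, by omega⟩) = _
      rw [emb_apply_in]
    have hτmono : StrictMono τ := by
      intro i j hij
      have h' : q1 ⟨a + τ i, by omega⟩ < q1 ⟨a + τ j, by omega⟩ := by
        rw [← hcomp, ← hcomp]; exact hg2 hij
      by_contra hle
      rcases lt_or_eq_of_le (not_lt.1 hle) with h3 | h3
      · exact absurd (hg1 h3) (not_lt.2 h'.le)
      · exact absurd (τ.injective h3) hij.ne'
    have hτ1 : τ = 1 := perm_strictMono_eq_one τ hτmono
    have hσ : σ1 = σ2 := by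
      have := congrArg (· * σ2) hτ1
      simpa [hτ, mul_assoc] using this
    have hq : q1 = q2 := by
      rw [hq2e, hτ1]
      simp [emb]
    subst hσ
    simp [hq]
  · rintro ⟨p, hp⟩
    set g : Fin L → Fin n := fun j => p ⟨a + j, by omega⟩ with hg
    set σ : Perm (Fin L) := Tuple.sort g with hσ
    have hginj : Function.Injective g := window_inj p hL
    have hmono : StrictMono (g ∘ σ) :=
      (Tuple.monotone_sort g).strictMono_of_injective (hginj.comp σ.injective)
    have hinc : TightInc L (p * emb hL σ) a := by
      rw [tightInc_iff hL]
      intro j1 j2 hj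
      show (p * emb hL σ) ⟨a + j1, by omega⟩ < (p * emb hL σ) ⟨a + j2, by omega⟩
      have e : ∀ j : Fin L, (p * emb hL σ) ⟨a + j, by omega⟩ = g (σ j) := by
        intro j
        show p (emb hL σ ⟨a + j, by omega⟩) = _
        rw [emb_apply_in]
      rw [e j1, e j2]
      exact hmono hj
    refine ⟨⟨⟨p * emb hL σ, hS _ _ hp, hinc⟩, σ⁻¹⟩, ?_⟩
    apply Subtype.ext
    show p * emb hL σ * emb hL σ⁻¹ = p
    rw [emb_inv, mul_assoc]
    simp

lemma key_card (hL : a + L ≤ n) (S : Perm (Fin n) → Prop)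
    (hS : ∀ p σ, S p → S (p * emb hL σ)) :
    Nat.card {p : Perm (Fin n) // S p}
      = Nat.card {p : Perm (Fin n) // S p ∧ TightInc L p a} * L.factorial := by
  rw [← Nat.card_eq_of_bijective _ (key_bij hL S hS), Nat.card_prod]
  congr 1
  simp [Nat.card_eq_fintype_card, Fintype.card_perm, Fintype.card_fin]

end TC

namespace TC

lemma card_one {n a L : ℕ} (hL : a + L ≤ n) :
    Nat.card {p : Perm (Fin n) // TightInc L p a} * L.factorial = n.factorial := by
  have h := key_card hL (fun _ => True) (fun _ _ _ => trivial)
  have h1 : Nat.card {p : Perm (Fin n) // True} = n.factorial := by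
    rw [Nat.card_congr (Equiv.subtypeUnivEquiv fun _ => trivial)]
    simp [Nat.card_eq_fintype_card, Fintype.card_perm, Fintype.card_fin]
  have h2 : Nat.card {p : Perm (Fin n) // True ∧ TightInc L p a}
      = Nat.card {p : Perm (Fin n) // TightInc L p a} :=
    Nat.card_congr (Equiv.subtypeEquivRight fun _ => by tauto)
  rw [h2] at h
  rw [← h, h1]

lemma tightInc_of_out {n k a b : ℕ} (hab : a + k ≤ b) (p : Perm (Fin n))
    (σ : Perm (Fin k)) (hak : a + k ≤ n) (h : TightInc k p b) :
    TightInc k (p * emb hak σ) b := by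
  intro j1 j2 h1 h2 h3
  have e1 : emb hak σ j1 = j1 := emb_apply_out hak σ j1 (by omega)
  have e2 : emb hak σ j2 = j2 := emb_apply_out hak σ j2 (by omega)
  show p (emb hak σ j1) < p (emb hak σ j2)
  rw [e1, e2]
  exact h j1 j2 h1 h2 h3

lemma card_two {n a b k : ℕ} (hab : a + k ≤ b) (hbn : b + k ≤ n) :
    Nat.card {p : Perm (Fin n) // TightInc k p a ∧ TightInc k p b}
      * (k.factorial * k.factorial) = n.factorial := by
  have hak : a + k ≤ n := by omega
  have h := key_card hak (fun p => TightInc k p b)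
    (fun p σ hp => tightInc_of_out hab p σ hak hp)
  have h2 : Nat.card {p : Perm (Fin n) // TightInc k p b ∧ TightInc k p a}
      = Nat.card {p : Perm (Fin n) // TightInc k p a ∧ TightInc k p b} :=
    Nat.card_congr (Equiv.subtypeEquivRight fun _ => by tauto)
  have h3 := card_one (n := n) (a := b) (L := k) hbn
  rw [h2] at h
  calc Nat.card {p : Perm (Fin n) // TightInc k p a ∧ TightInc k p b}
      * (k.factorial * k.factorial)
      = Nat.card {p : Perm (Fin n) // TightInc k p a ∧ TightInc k p b}
          * k.factorial * k.factorial := by ring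
    _ = Nat.card {p : Perm (Fin n) // TightInc k p b} * k.factorial := by rw [← h]
    _ = n.factorial := h3

lemma tightInc_mono {n k i : ℕ} (p : Perm (Fin n)) (h : TightInc (k+1) p i) :
    TightInc k p i ∧ TightInc k p (i+1) := by
  constructor
  · intro j1 j2 h1 h2 h3
    exact h j1 j2 h1 h2 (by omega)
  · intro j1 j2 h1 h2 h3
    exact h j1 j2 (by omega) h2 (by omega)

end TC

/-- The number of tight (consecutive-position) occurrences of `12⋯k` in `p`. -/
noncomputable def tightCount (n k : ℕ) (p : Equiv.Perm (Fin n)) : ℕ :=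
  Nat.card {i : ℕ // i + k ≤ n ∧ TightInc k p i}

/-- The expectation of the number of tight occurrences of `12⋯k`. -/
noncomputable def EY (n k : ℕ) : ℝ :=
  (∑ p : Equiv.Perm (Fin n), (tightCount n k p : ℝ)) / n.factorial

/-- The variance of the number of tight occurrences of `12⋯k`. -/
noncomputable def VarY (n k : ℕ) : ℝ :=
  (∑ p : Equiv.Perm (Fin n), (tightCount n k p : ℝ) ^ 2) / n.factorial - (EY n k) ^ 2

namespace TC

variable {n k : ℕ}

open scoped Classical in
lemma tightCount_eq (p : Perm (Fin n)) :
    (tightCount n k p : ℝ)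
      = ∑ i ∈ range (n + 1 - k), (if TightInc k p i then (1:ℝ) else 0) := by
  rw [Finset.sum_boole]
  congr 1
  rw [tightCount]
  rw [Nat.card_congr (Equiv.subtypeEquivRight (q := fun i =>
    i ∈ (range (n + 1 - k)).filter (fun i => TightInc k p i)) (fun i => by
      simp only [Finset.mem_filter, Finset.mem_range]
      constructor
      · rintro ⟨h1, h2⟩; exact ⟨by omega, h2⟩
      · rintro ⟨h1, h2⟩; exact ⟨by omega, h2⟩))]
  exact Nat.card_eq_finsetCard _

open scoped Classical in
lemma sum_indicator (P : Perm (Fin n) → Prop) :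
    ∑ p : Perm (Fin n), (if P p then (1:ℝ) else 0)
      = (Nat.card {p : Perm (Fin n) // P p} : ℝ) := by
  rw [Finset.sum_boole, Nat.card_eq_fintype_card, Fintype.card_subtype]

lemma card_T_real {i : ℕ} (h : i + k ≤ n) :
    (Nat.card {p : Perm (Fin n) // TightInc k p i} : ℝ)
      = n.factorial / k.factorial := by
  have := card_one (n := n) (a := i) (L := k) h
  have hk : (k.factorial : ℝ) ≠ 0 := Nat.cast_ne_zero.2 k.factorial_ne_zero
  rw [eq_div_iff hk]
  exact_mod_cast this

lemma EY_eq : EY n k = (n + 1 - k : ℕ) / k.factorial := by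
  classical
  have hsum : ∑ p : Perm (Fin n), (tightCount n k p : ℝ)
      = (n + 1 - k : ℕ) * (n.factorial / k.factorial) := by
    rw [Finset.sum_congr rfl (fun p _ => tightCount_eq p), Finset.sum_comm]
    rw [Finset.sum_congr rfl (fun i hi => by
      rw [sum_indicator (fun p => TightInc k p i),
        card_T_real (by simp only [Finset.mem_range] at hi; omega)])]
    rw [Finset.sum_const, Finset.card_range, nsmul_eq_mul]
  rw [EY, hsum]
  have hn : (n.factorial : ℝ) ≠ 0 := Nat.cast_ne_zero.2 n.factorial_ne_zero
  have hk : (k.factorial : ℝ) ≠ 0 := Nat.cast_ne_zero.2 k.factorial_ne_zero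
  field_simp

end TC

namespace TC

variable {n k : ℕ}

lemma card_TT_diag {i : ℕ} (h : i + k ≤ n) :
    (Nat.card {p : Perm (Fin n) // TightInc k p i ∧ TightInc k p i} : ℝ)
      = n.factorial / k.factorial := by
  rw [Nat.card_congr (Equiv.subtypeEquivRight fun p =>
    (and_self_iff : TightInc k p i ∧ TightInc k p i ↔ _))]
  exact card_T_real h

lemma card_TT_far {i j : ℕ} (hij : i + k ≤ j) (hj : j + k ≤ n) :
    (Nat.card {p : Perm (Fin n) // TightInc k p i ∧ TightInc k p j} : ℝ)
      = n.factorial / (k.factorial * k.factorial) := by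
  have := card_two hij hj
  have hkk : ((k.factorial * k.factorial : ℕ) : ℝ) ≠ 0 :=
    Nat.cast_ne_zero.2 (Nat.mul_ne_zero k.factorial_ne_zero k.factorial_ne_zero)
  rw [eq_div_iff (by exact_mod_cast hkk)]
  exact_mod_cast this

lemma card_TT_adj {i : ℕ} (h : i + 1 + k ≤ n) :
    (n.factorial : ℝ) / (k + 1).factorial
      ≤ (Nat.card {p : Perm (Fin n) // TightInc k p i ∧ TightInc k p (i+1)} : ℝ) := by
  have h1 : i + (k + 1) ≤ n := by omega
  have h2 := card_one (n := n) (a := i) (L := k + 1) h1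
  have hle : Nat.card {p : Perm (Fin n) // TightInc (k+1) p i}
      ≤ Nat.card {p : Perm (Fin n) // TightInc k p i ∧ TightInc k p (i+1)} :=
    Nat.card_le_card_of_injective
      (Subtype.impEmbedding _ _ (fun p hp => tightInc_mono p hp))
      (Subtype.impEmbedding _ _ (fun p hp => tightInc_mono p hp)).injective
  have hk1 : ((k+1).factorial : ℝ) ≠ 0 := Nat.cast_ne_zero.2 (k+1).factorial_ne_zero
  rw [div_le_iff₀ (by positivity)]
  calc (n.factorial : ℝ)
      = (Nat.card {p : Perm (Fin n) // TightInc (k+1) p i} : ℝ) * ((k+1).factorial : ℝ) := by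
        exact_mod_cast h2.symm
    _ ≤ _ := by
        apply mul_le_mul_of_nonneg_right _ (by positivity)
        exact_mod_cast hle

open scoped Classical in
lemma sum_sq_eq :
    ∑ p : Perm (Fin n), (tightCount n k p : ℝ) ^ 2
      = ∑ i ∈ range (n + 1 - k), ∑ j ∈ range (n + 1 - k),
          (Nat.card {p : Perm (Fin n) // TightInc k p i ∧ TightInc k p j} : ℝ) := by
  have step1 : ∀ p : Perm (Fin n), (tightCount n k p : ℝ) ^ 2
      = ∑ i ∈ range (n + 1 - k), ∑ j ∈ range (n + 1 - k),
          (@ite ℝ (TightInc k p i ∧ TightInc k p j)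
            (Classical.propDecidable _) (1:ℝ) 0) := by
    intro p
    rw [sq, tightCount_eq, Finset.sum_mul_sum]
    refine Finset.sum_congr rfl fun i _ => Finset.sum_congr rfl fun j _ => ?_
    split_ifs with h1 h2 h3 h4 h5 <;> simp_all <;> tauto
  rw [Finset.sum_congr rfl fun p _ => step1 p, Finset.sum_comm]
  refine Finset.sum_congr rfl fun i _ => ?_
  rw [Finset.sum_comm]
  exact Finset.sum_congr rfl fun j _ => sum_indicator _

end TC

namespace TC

variable {n k : ℕ}

open scoped Classical in
lemma pointwise_lb (hk : 2 ≤ k) {i j : ℕ} (hi : i + k ≤ n) (hj : j + k ≤ n) :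
    (n.factorial : ℝ) / (k.factorial * k.factorial)
      + (if i = j then (n.factorial : ℝ) / k.factorial
          - n.factorial / (k.factorial * k.factorial) else 0)
      + (if i + 1 = j then (n.factorial : ℝ) / (k+1).factorial else 0)
      + (if j + 1 = i then (n.factorial : ℝ) / (k+1).factorial else 0)
      - (if i ≠ j ∧ ¬(i + k ≤ j ∨ j + k ≤ i)
          then (n.factorial : ℝ) / (k.factorial * k.factorial) else 0)
      ≤ (Nat.card {p : Perm (Fin n) // TightInc k p i ∧ TightInc k p j} : ℝ) := by
  by_cases h1 : i = j
  · subst h1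
    have e1 : (if i = i then (n.factorial : ℝ) / k.factorial
        - n.factorial / (k.factorial * k.factorial) else 0)
        = (n.factorial : ℝ) / k.factorial
          - n.factorial / (k.factorial * k.factorial) := if_pos rfl
    have e2 : (if i + 1 = i then (n.factorial : ℝ) / (k+1).factorial else 0) = 0 :=
      if_neg (by omega)
    have e3 : (if i ≠ i ∧ ¬(i + k ≤ i ∨ i + k ≤ i)
        then (n.factorial : ℝ) / (k.factorial * k.factorial) else 0) = 0 :=
      if_neg (fun h => h.1 rfl)
    rw [e1, e2, e3, card_TT_diag hi]
    ring_nf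
    exact le_refl _
  · by_cases h2 : i + 1 = j
    · rw [if_neg h1, if_pos h2, if_neg (by omega),
        if_pos ⟨h1, by omega⟩]
      have : i + 1 + k ≤ n := by omega
      subst h2
      have := card_TT_adj (n := n) (k := k) (i := i) this
      linarith
    · by_cases h3 : j + 1 = i
      · rw [if_neg h1, if_neg h2, if_pos h3, if_pos ⟨h1, by omega⟩]
        have hA : j + 1 + k ≤ n := by omega
        have hcongr : Nat.card {p : Perm (Fin n) // TightInc k p i ∧ TightInc k p j}
            = Nat.card {p : Perm (Fin n) // TightInc k p j ∧ TightInc k p (j+1)} := by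
          apply Nat.card_congr (Equiv.subtypeEquivRight fun p => ?_)
          rw [← h3]; tauto
        rw [hcongr]
        have := card_TT_adj (n := n) (k := k) (i := j) hA
        linarith
      · by_cases h4 : i + k ≤ j ∨ j + k ≤ i
        · rw [if_neg h1, if_neg h2, if_neg h3, if_neg (by tauto)]
          rcases h4 with h4 | h4
          · rw [card_TT_far h4 hj]; ring_nf; exact le_refl _
          · have hcongr : Nat.card {p : Perm (Fin n) // TightInc k p i ∧ TightInc k p j}
                = Nat.card {p : Perm (Fin n) // TightInc k p j ∧ TightInc k p i} :=
              Nat.card_congr (Equiv.subtypeEquivRight fun p => by tauto)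
            rw [hcongr, card_TT_far h4 hi]; ring_nf; exact le_refl _
        · rw [if_neg h1, if_neg h2, if_neg h3, if_pos ⟨h1, h4⟩]
          have : (0:ℝ) ≤ (Nat.card {p : Perm (Fin n) // TightInc k p i ∧ TightInc k p j} : ℝ) :=
            Nat.cast_nonneg _
          linarith

end TC

namespace TC

variable {n k : ℕ}

open scoped Classical in
lemma sum_lb (hk : 2 ≤ k) :
    ((n + 1 - k : ℕ):ℝ)^2 * ((n.factorial : ℝ) / (k.factorial * k.factorial))
      + ((n + 1 - k : ℕ):ℝ) * ((n.factorial : ℝ) / k.factorial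
          - (n.factorial : ℝ) / (k.factorial * k.factorial))
      + 2 * ((n - k : ℕ):ℝ) * ((n.factorial : ℝ) / (k+1).factorial)
      - ((n + 1 - k : ℕ):ℝ) * (2*(k:ℝ) - 2)
          * ((n.factorial : ℝ) / (k.factorial * k.factorial))
      ≤ ∑ i ∈ range (n + 1 - k), ∑ j ∈ range (n + 1 - k),
          (Nat.card {p : Perm (Fin n) // TightInc k p i ∧ TightInc k p j} : ℝ) := by
  set m := n + 1 - k with hm
  set q1 : ℝ := (n.factorial : ℝ) / k.factorial with hq1
  set q2 : ℝ := (n.factorial : ℝ) / (k.factorial * k.factorial) with hq2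
  set q3 : ℝ := (n.factorial : ℝ) / (k+1).factorial with hq3
  have hq2pos : 0 ≤ q2 := by rw [hq2]; positivity
  have hq3pos : 0 ≤ q3 := by rw [hq3]; positivity
  -- pointwise bound
  have pw : ∀ i ∈ range m, ∀ j ∈ range m,
      q2 + (if i = j then q1 - q2 else 0) + (if i + 1 = j then q3 else 0)
        + (if j + 1 = i then q3 else 0)
        - (if i ≠ j ∧ ¬(i + k ≤ j ∨ j + k ≤ i) then q2 else 0)
      ≤ (Nat.card {p : Perm (Fin n) // TightInc k p i ∧ TightInc k p j} : ℝ) := by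
    intro i hi j hj
    rw [Finset.mem_range] at hi hj
    exact pointwise_lb hk (by omega) (by omega)
  have hstep : ∑ i ∈ range m, ∑ j ∈ range m,
      (q2 + (if i = j then q1 - q2 else 0) + (if i + 1 = j then q3 else 0)
        + (if j + 1 = i then q3 else 0)
        - (if i ≠ j ∧ ¬(i + k ≤ j ∨ j + k ≤ i) then q2 else 0))
      ≤ ∑ i ∈ range m, ∑ j ∈ range m,
          (Nat.card {p : Perm (Fin n) // TightInc k p i ∧ TightInc k p j} : ℝ) :=
    Finset.sum_le_sum fun i hi => Finset.sum_le_sum fun j hj => pw i hi j hj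
  refine le_trans ?_ hstep
  -- split the sums
  have hT0 : ∑ _i ∈ range m, ∑ _j ∈ range m, q2 = (m:ℝ)^2 * q2 := by
    simp [Finset.sum_const, Finset.card_range]; ring
  have hT1 : ∑ i ∈ range m, ∑ j ∈ range m, (if i = j then q1 - q2 else 0)
      = (m:ℝ) * (q1 - q2) := by
    rw [Finset.sum_congr rfl (fun i hi => Finset.sum_ite_eq (range m) i (fun _ => q1 - q2))]
    rw [Finset.sum_congr rfl (fun i hi => if_pos hi), Finset.sum_const, Finset.card_range,
      nsmul_eq_mul]
  have hfilter : (range m).filter (fun i => i + 1 ∈ range m) = range (n - k) := by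
    ext x
    simp only [Finset.mem_filter, Finset.mem_range]
    omega
  have hT2 : ∑ i ∈ range m, ∑ j ∈ range m, (if i + 1 = j then q3 else 0)
      = ((n - k : ℕ):ℝ) * q3 := by
    rw [Finset.sum_congr rfl (fun i hi => Finset.sum_ite_eq (range m) (i+1) (fun _ => q3))]
    rw [Finset.sum_ite, Finset.sum_const, Finset.sum_const_zero, add_zero, hfilter,
      Finset.card_range, nsmul_eq_mul]
  have hT3 : ∑ i ∈ range m, ∑ j ∈ range m, (if j + 1 = i then q3 else 0)
      = ((n - k : ℕ):ℝ) * q3 := by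
    rw [Finset.sum_comm]
    rw [Finset.sum_congr rfl (fun j hj => Finset.sum_ite_eq (range m) (j+1) (fun _ => q3))]
    rw [Finset.sum_ite, Finset.sum_const, Finset.sum_const_zero, add_zero, hfilter,
      Finset.card_range, nsmul_eq_mul]
  have hT4 : ∑ i ∈ range m, ∑ j ∈ range m,
      (if i ≠ j ∧ ¬(i + k ≤ j ∨ j + k ≤ i) then q2 else 0)
      ≤ (m:ℝ) * ((2*(k:ℝ) - 2) * q2) := by
    have inner : ∀ i, ∑ j ∈ range m,
        (if i ≠ j ∧ ¬(i + k ≤ j ∨ j + k ≤ i) then q2 else 0)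
        ≤ (2*(k:ℝ) - 2) * q2 := by
      intro i
      rw [Finset.sum_ite, Finset.sum_const, Finset.sum_const_zero, add_zero, nsmul_eq_mul]
      apply mul_le_mul_of_nonneg_right _ hq2pos
      have hsub : (range m).filter (fun j => i ≠ j ∧ ¬(i + k ≤ j ∨ j + k ≤ i))
          ⊆ (Finset.Ico (i + 1 - k) (i + k)).erase i := by
        intro x hx
        simp only [Finset.mem_filter, Finset.mem_range] at hx
        simp only [Finset.mem_erase, Finset.mem_Ico]
        omega
      have hcard := Finset.card_le_card hsub
      have hmem : i ∈ Finset.Ico (i + 1 - k) (i + k) := by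
        simp only [Finset.mem_Ico]; omega
      rw [Finset.card_erase_of_mem hmem, Nat.card_Ico] at hcard
      have : ((range m).filter (fun j => i ≠ j ∧ ¬(i + k ≤ j ∨ j + k ≤ i))).card
          ≤ 2 * k - 2 := by omega
      calc (((range m).filter (fun j => i ≠ j ∧ ¬(i + k ≤ j ∨ j + k ≤ i))).card : ℝ)
          ≤ ((2 * k - 2 : ℕ) : ℝ) := by exact_mod_cast this
        _ = 2*(k:ℝ) - 2 := by
            have : (2:ℕ) ≤ 2 * k := by omega
            push_cast [Nat.cast_sub this]
            ring
    calc ∑ i ∈ range m, ∑ j ∈ range m,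
        (if i ≠ j ∧ ¬(i + k ≤ j ∨ j + k ≤ i) then q2 else 0)
        ≤ ∑ _i ∈ range m, (2*(k:ℝ) - 2) * q2 := Finset.sum_le_sum fun i _ => inner i
      _ = (m:ℝ) * ((2*(k:ℝ) - 2) * q2) := by
          rw [Finset.sum_const, Finset.card_range, nsmul_eq_mul]
  have hsplit : ∑ i ∈ range m, ∑ j ∈ range m,
      (q2 + (if i = j then q1 - q2 else 0) + (if i + 1 = j then q3 else 0)
        + (if j + 1 = i then q3 else 0)
        - (if i ≠ j ∧ ¬(i + k ≤ j ∨ j + k ≤ i) then q2 else 0))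
      = (∑ _i ∈ range m, ∑ _j ∈ range m, q2)
        + (∑ i ∈ range m, ∑ j ∈ range m, (if i = j then q1 - q2 else 0))
        + (∑ i ∈ range m, ∑ j ∈ range m, (if i + 1 = j then q3 else 0))
        + (∑ i ∈ range m, ∑ j ∈ range m, (if j + 1 = i then q3 else 0))
        - (∑ i ∈ range m, ∑ j ∈ range m,
            (if i ≠ j ∧ ¬(i + k ≤ j ∨ j + k ≤ i) then q2 else 0)) := by
    simp only [← Finset.sum_add_distrib, ← Finset.sum_sub_distrib]
  rw [hsplit, hT0, hT1, hT2, hT3]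
  have := hT4
  linarith

end TC

namespace TC

variable {n k : ℕ}

lemma VarY_lb (hk : 2 ≤ k) :
    ((k.factorial : ℝ)⁻¹ + 2 / (k + 1).factorial -
        (2 * (k : ℝ) - 1) / (k.factorial : ℝ) ^ 2) * ((n + 1 - k : ℕ) : ℝ)
      - 2 / ((k+1).factorial : ℝ) ≤ VarY n k := by
  classical
  have hS2 := sum_lb (n := n) hk
  rw [VarY, sum_sq_eq, EY_eq]
  set M : ℝ := ((n + 1 - k : ℕ) : ℝ) with hM
  set M1 : ℝ := ((n - k : ℕ) : ℝ) with hM1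
  have hF : (0:ℝ) < (k.factorial : ℝ) := by exact_mod_cast k.factorial_pos
  have hG : (0:ℝ) < ((k+1).factorial : ℝ) := by exact_mod_cast (k+1).factorial_pos
  have hN : (0:ℝ) < (n.factorial : ℝ) := by exact_mod_cast n.factorial_pos
  have hMM : M ≤ M1 + 1 := by
    rw [hM, hM1]
    have : n + 1 - k ≤ (n - k) + 1 := by omega
    exact_mod_cast this
  have hdiv : (M^2 * ((n.factorial : ℝ) / (k.factorial * k.factorial))
      + M * ((n.factorial : ℝ) / k.factorial
          - (n.factorial : ℝ) / (k.factorial * k.factorial))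
      + 2 * M1 * ((n.factorial : ℝ) / (k+1).factorial)
      - M * (2*(k:ℝ) - 2) * ((n.factorial : ℝ) / (k.factorial * k.factorial)))
        / (n.factorial : ℝ)
      ≤ (∑ i ∈ range (n + 1 - k), ∑ j ∈ range (n + 1 - k),
          (Nat.card {p : Perm (Fin n) // TightInc k p i ∧ TightInc k p j} : ℝ))
        / (n.factorial : ℝ) := by
    gcongr
  have heq : (M^2 * ((n.factorial : ℝ) / (k.factorial * k.factorial))
      + M * ((n.factorial : ℝ) / k.factorial
          - (n.factorial : ℝ) / (k.factorial * k.factorial))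
      + 2 * M1 * ((n.factorial : ℝ) / (k+1).factorial)
      - M * (2*(k:ℝ) - 2) * ((n.factorial : ℝ) / (k.factorial * k.factorial)))
        / (n.factorial : ℝ)
      = M^2 / (k.factorial * k.factorial)
        + M * (1 / k.factorial - 1 / (k.factorial * k.factorial))
        + 2 * M1 / (k+1).factorial
        - M * (2*(k:ℝ) - 2) / (k.factorial * k.factorial) := by
    field_simp
  rw [heq] at hdiv
  have hfinal : ((k.factorial : ℝ)⁻¹ + 2 / (k + 1).factorial -
        (2 * (k : ℝ) - 1) / (k.factorial : ℝ) ^ 2) * M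
      - 2 / ((k+1).factorial : ℝ)
      ≤ (M^2 / (k.factorial * k.factorial)
        + M * (1 / k.factorial - 1 / (k.factorial * k.factorial))
        + 2 * M1 / (k+1).factorial
        - M * (2*(k:ℝ) - 2) / (k.factorial * k.factorial)) - (M / k.factorial)^2 := by
    have hnn : (0:ℝ) ≤ 2 * (M1 - M + 1) / ((k+1).factorial : ℝ) := by
      apply div_nonneg _ hG.le
      linarith
    have key : (M^2 / (k.factorial * k.factorial)
        + M * (1 / k.factorial - 1 / (k.factorial * k.factorial))
        + 2 * M1 / (k+1).factorial
        - M * (2*(k:ℝ) - 2) / (k.factorial * k.factorial)) - (M / k.factorial)^2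
        - (((k.factorial : ℝ)⁻¹ + 2 / (k + 1).factorial -
            (2 * (k : ℝ) - 1) / (k.factorial : ℝ) ^ 2) * M
          - 2 / ((k+1).factorial : ℝ))
        = 2 * (M1 - M + 1) / ((k+1).factorial : ℝ) := by
      field_simp
      ring
    linarith
  linarith

end TC

namespace TC

lemma coeff_pos {k : ℕ} (hk : 2 ≤ k) :
    0 < (k.factorial : ℝ)⁻¹ + 2 / (k + 1).factorial -
        (2 * (k : ℝ) - 1) / (k.factorial : ℝ) ^ 2 := by
  have hnat : (2 * k - 1) * (k + 1) < (k + 1).factorial + 2 * k.factorial := by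
    rcases eq_or_lt_of_le hk with h | h
    · subst h; decide
    · obtain ⟨j, rfl⟩ : ∃ j, k = j + 3 := ⟨k - 3, by omega⟩
      have h2 : 2 ≤ (j + 2).factorial := by
        calc 2 = Nat.factorial 2 := rfl
          _ ≤ (j + 2).factorial := Nat.factorial_le (by omega)
      have hkk : (j + 3).factorial = (j + 3) * (j + 2).factorial := Nat.factorial_succ _
      have h4 : 2 * (j + 3) ≤ (j + 3).factorial := by
        rw [hkk]
        calc 2 * (j + 3) = (j + 3) * 2 := by ring
          _ ≤ (j + 3) * (j + 2).factorial := Nat.mul_le_mul_left _ h2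
      have h5 : (j + 3 + 1).factorial = (j + 3 + 1) * (j + 3).factorial :=
        Nat.factorial_succ _
      have h6 : (j + 3 + 1) * (2 * (j + 3)) ≤ (j + 3 + 1) * (j + 3).factorial :=
        Nat.mul_le_mul_left _ h4
      have h7 : 2 * (j + 3) - 1 = 2 * j + 5 := by omega
      rw [h7, h5]
      nlinarith [h6, Nat.factorial_pos (j + 3)]
  have hF : (0:ℝ) < (k.factorial : ℝ) := by exact_mod_cast k.factorial_pos
  have hG : (0:ℝ) < ((k+1).factorial : ℝ) := by exact_mod_cast (k+1).factorial_pos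
  have hreal : (2 * (k:ℝ) - 1) * ((k:ℝ) + 1)
      < ((k + 1).factorial : ℝ) + 2 * (k.factorial : ℝ) := by
    have h1 : ((2 * k - 1) * (k + 1) : ℕ) < ((k + 1).factorial + 2 * k.factorial : ℕ) := hnat
    have h2 : (((2 * k - 1) * (k + 1) : ℕ) : ℝ) = (2 * (k:ℝ) - 1) * ((k:ℝ) + 1) := by
      have : (1:ℕ) ≤ 2 * k := by omega
      push_cast [Nat.cast_sub this]
      ring
    rw [← h2]
    exact_mod_cast h1
  have hGe : ((k+1).factorial : ℝ) = ((k:ℝ) + 1) * (k.factorial : ℝ) := by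
    rw [Nat.factorial_succ]; push_cast; ring
  have key : ((k.factorial : ℝ)⁻¹ + 2 / (k + 1).factorial -
        (2 * (k : ℝ) - 1) / (k.factorial : ℝ) ^ 2)
      = (((k + 1).factorial : ℝ) + 2 * (k.factorial : ℝ)
          - (2 * (k:ℝ) - 1) * ((k:ℝ) + 1)) / (((k:ℝ) + 1) * (k.factorial : ℝ) ^ 2) := by
    rw [hGe]
    field_simp
  rw [key]
  apply div_pos (by linarith) (by positivity)

end TC

theorem tight_count_expectation_and_variance (k : ℕ) (hk : 2 ≤ k) :
    (∀ n : ℕ, k ≤ n + 1 → EY n k = ((n : ℝ) - (k : ℝ) + 1) / k.factorial) ∧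
    (∃ d : ℝ, ∀ n : ℕ,
      ((k.factorial : ℝ)⁻¹ + 2 / (k + 1).factorial -
        (2 * (k : ℝ) - 1) / (k.factorial : ℝ) ^ 2) * (n : ℝ) + d ≤ VarY n k) ∧
    (0 < (k.factorial : ℝ)⁻¹ + 2 / (k + 1).factorial -
        (2 * (k : ℝ) - 1) / (k.factorial : ℝ) ^ 2) ∧
    (∃ c : ℝ, 0 < c ∧ ∃ N : ℕ, ∀ n : ℕ, N ≤ n → c * (n : ℝ) ≤ VarY n k) := by
  set C : ℝ := (k.factorial : ℝ)⁻¹ + 2 / (k + 1).factorial -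
        (2 * (k : ℝ) - 1) / (k.factorial : ℝ) ^ 2 with hC
  have hCpos : 0 < C := TC.coeff_pos hk
  set d : ℝ := C * (1 - (k:ℝ)) - 2 / ((k+1).factorial : ℝ) with hd
  clear_value C d
  have hvar : ∀ n : ℕ, C * (n : ℝ) + d ≤ VarY n k := by
    intro n
    have hlb := TC.VarY_lb (n := n) hk
    rw [← hC] at hlb
    have hM : (n:ℝ) + 1 - (k:ℝ) ≤ ((n + 1 - k : ℕ) : ℝ) := by
      rcases le_or_gt k (n+1) with h | h
      · have : ((n + 1 - k : ℕ) : ℝ) = (n:ℝ) + 1 - (k:ℝ) := by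
          push_cast [Nat.cast_sub h]; ring
        linarith
      · have h0 : n + 1 - k = 0 := by omega
        rw [h0]
        have : (n:ℝ) + 1 ≤ (k:ℝ) := by exact_mod_cast h.le
        simp only [Nat.cast_zero]
        linarith
    have hmul : C * ((n:ℝ) + 1 - (k:ℝ)) ≤ C * ((n + 1 - k : ℕ) : ℝ) :=
      mul_le_mul_of_nonneg_left hM hCpos.le
    rw [hd]
    calc C * (n : ℝ) + (C * (1 - (k:ℝ)) - 2 / ((k+1).factorial : ℝ))
        = C * ((n:ℝ) + 1 - (k:ℝ)) - 2 / ((k+1).factorial : ℝ) := by ring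
      _ ≤ C * ((n + 1 - k : ℕ) : ℝ) - 2 / ((k+1).factorial : ℝ) := by linarith
      _ ≤ VarY n k := hlb
  refine ⟨?_, ⟨d, hvar⟩, hCpos, ?_⟩
  · intro n hn
    rw [TC.EY_eq]
    congr 1
    push_cast [Nat.cast_sub hn]
    ring
  · refine ⟨C / 2, by positivity, Nat.ceil ((-2 * d) / C), fun n hn => ?_⟩
    have h1 : (-2 * d) / C ≤ (n : ℝ) := by
      calc (-2 * d) / C ≤ (Nat.ceil ((-2 * d) / C) : ℝ) := Nat.le_ceil _
        _ ≤ (n : ℝ) := by exact_mod_cast hn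
    have h2 : -d ≤ C / 2 * (n : ℝ) := by
      rw [div_le_iff₀ hCpos] at h1
      linarith
    calc C / 2 * (n : ℝ) = C * (n : ℝ) + d + (- d - C / 2 * (n:ℝ)) + 0 := by ring
      _ ≤ VarY n k := by
          have := hvar n
          linarith
end
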